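/- Fix d ≥ 1 and λ, μ ∈ W^d. Then the exponential generating function of Weyl oscillating lattice walks from λ to μ satisfies Σ_{n≥0} b_n(λ;μ) t^n/n! = det( I_{μ_i−λ_j}(2t) − I_{μ_i+λ_j}(2t) )_{1≤i,j≤d} as formal power series in t over ℚ; equivalently, for every n ≥ 0, b_n(λ;μ) equals n! times the coefficient of t^n in that d×d determinant. -/

import Mathlib

open scoped BigOperators

/-- The `d`-dimensional Weyl chamber `W^d = {x ∈ ℤ^d : x₁ > x₂ > ⋯ > x_d > 0}`. -/
def WeylChamber (d : ℕ) : Set (Fin d → ℤ) :=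
  {x | (∀ i j : Fin d, i < j → x j < x i) ∧ ∀ i, 0 < x i}

/-- `q` is obtained from `p` by adding a positive or negative unit coordinate vector. -/
def IsUnitStep {d : ℕ} (p q : Fin d → ℤ) : Prop :=
  ∃ i : Fin d, q = p + Pi.single i 1 ∨ q = p - Pi.single i 1

/-- The number `b_n(λ;μ)` of Weyl oscillating lattice walks of length `n` from `lam`
to `mu`: sequences `lam = p⁰, p¹, …, pⁿ = mu` of points of `W^d` in which each
difference `p^{k+1} - p^k` is a positive or negative unit coordinate vector. -/
noncomputable def oscWalkCount (d n : ℕ) (lam mu : Fin d → ℤ) : ℕ :=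
  Nat.card {p : Fin (n + 1) → (Fin d → ℤ) //
    p 0 = lam ∧ p (Fin.last n) = mu ∧ (∀ k, p k ∈ WeylChamber d) ∧
    ∀ k : Fin n, IsUnitStep (p k.castSucc) (p k.succ)}

/-- The hyperbolic Bessel function of the first kind `I_s(2t)`, as a formal power
series in `t` over `ℚ`:  `I_s(2t) = Σ_{k,m ≥ 0, m - k = s} t^{m+k}/(m! k!)`,
i.e. the coefficient of `z^s` in `exp(t(z + z⁻¹))`. -/
noncomputable def besselI (s : ℤ) : PowerSeries ℚ :=
  PowerSeries.mk fun n =>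
    ∑ k ∈ Finset.range (n + 1),
      if ((n - k : ℕ) : ℤ) - (k : ℤ) = s then
        (1 : ℚ) / ((n - k).factorial * k.factorial) else 0

/-!
Both sides satisfy the same recursion in `n`. Deleting the last step of a walk ending at
`μ ∈ W^d` gives `b_{n+1}(λ;μ) = Σ_r (b_n(λ;μ+e_r) + b_n(λ;μ-e_r))`. On the other side,
`I_s' = I_{s-1} + I_{s+1}`, and the derivative of a determinant is the sum of the determinants
with one row differentiated, so `D_μ' = Σ_r (D_{μ+e_r} + D_{μ-e_r})` for
`D_μ := det(I_{μ_i-λ_j} - I_{μ_i+λ_j})`. A step out of the chamber lands on a wall, where two rows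
of the matrix coincide or a row vanishes (as `I_{-s} = I_s`), so `D_ν = 0 = b_n(λ;ν)` there.
At `t = 0` the matrix is `(δ_{μ_i,λ_j})`, whose determinant is `δ_{λ,μ}` because `λ` and `μ`
are strictly decreasing.
-/

open Finset PowerSeries
open scoped Nat

noncomputable def besselTerm (s : ℤ) (p : ℕ × ℕ) : ℚ :=
  if (p.2 : ℤ) - p.1 = s then 1 / (p.2 ! * p.1 !) else 0

theorem coeff_besselI (s : ℤ) (n : ℕ) :
    coeff n (besselI s) = ∑ p ∈ antidiagonal n, besselTerm s p := by
  rw [besselI, coeff_mk, Nat.sum_antidiagonal_eq_sum_range_succ (fun k m => besselTerm s (k, m))]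
  rfl

theorem besselTerm_swap (s : ℤ) (p : ℕ × ℕ) : besselTerm (-s) p.swap = besselTerm s p := by
  simp only [besselTerm, Prod.fst_swap, Prod.snd_swap, mul_comm (p.1 ! : ℚ)]
  exact if_congr (by omega) rfl rfl

theorem succ_mul_besselTerm_succ_fst (s : ℤ) (p : ℕ × ℕ) :
    (p.1 + 1 : ℚ) * besselTerm s (p.1 + 1, p.2) = besselTerm (s + 1) p := by
  simp only [besselTerm, Nat.factorial_succ]
  push_cast
  rw [mul_ite, mul_zero]
  refine if_congr (by omega) ?_ rfl
  field_simp

theorem succ_mul_besselTerm_succ_snd (s : ℤ) (p : ℕ × ℕ) :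
    (p.2 + 1 : ℚ) * besselTerm s (p.1, p.2 + 1) = besselTerm (s - 1) p := by
  simp only [besselTerm, Nat.factorial_succ]
  push_cast
  rw [mul_ite, mul_zero]
  refine if_congr (by omega) ?_ rfl
  field_simp

theorem besselI_neg (s : ℤ) : besselI (-s) = besselI s := by
  ext n
  simp only [coeff_besselI, ← besselTerm_swap s, Nat.sum_antidiagonal_swap (f := besselTerm (-s))]

theorem constantCoeff_besselI (s : ℤ) : constantCoeff (besselI s) = if s = 0 then 1 else 0 := by
  rw [← coeff_zero_eq_constantCoeff_apply, coeff_besselI]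
  simp [besselTerm, eq_comm]

theorem derivative_besselI (s : ℤ) :
    derivative ℚ (besselI s) = besselI (s - 1) + besselI (s + 1) := by
  ext n
  have hsplit : coeff (n + 1) (besselI s) * (n + 1) =
      ∑ p ∈ antidiagonal (n + 1), (p.1 * besselTerm s p + p.2 * besselTerm s p) := by
    rw [coeff_besselI, sum_mul]
    refine sum_congr rfl fun p hp => ?_
    rw [← add_mul, mul_comm, ← Nat.cast_add, mem_antidiagonal.mp hp]
    push_cast
    ring
  rw [coeff_derivative, hsplit, sum_add_distrib, Nat.sum_antidiagonal_succ,
    Nat.sum_antidiagonal_succ', map_add, coeff_besselI, coeff_besselI, add_comm]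
  simp [succ_mul_besselTerm_succ_fst, succ_mul_besselTerm_succ_snd]

section Derivation

variable {R A : Type*} [CommSemiring R] [CommRing A] [Algebra R A] (D : Derivation R A A)

theorem Derivation.map_prod_eq_sum_update {ι : Type*} [DecidableEq ι] (s : Finset ι) (f : ι → A) :
    D (∏ i ∈ s, f i) = ∑ i ∈ s, ∏ j ∈ s, Function.update f i (D (f i)) j := by
  induction s using Finset.induction_on with
  | empty => simp
  | insert a s ha ih =>
    rw [prod_insert ha, sum_insert ha, prod_insert ha, Function.update_self,
      prod_update_of_notMem ha, D.leibniz, ih, smul_eq_mul, smul_eq_mul, mul_sum, add_comm,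
      mul_comm (D (f a))]
    congr 1
    refine sum_congr rfl fun i hi => ?_
    rw [prod_insert ha, Function.update_of_ne (ne_of_mem_of_not_mem hi ha).symm]

theorem Derivation.map_det_eq_sum_updateCol {n : Type*} [DecidableEq n] [Fintype n]
    (M : Matrix n n A) :
    D M.det = ∑ c, (M.updateCol c fun i => D (M i c)).det := by
  simp only [Matrix.det_apply, map_sum, Derivation.map_smul_of_tower, D.map_prod_eq_sum_update,
    smul_sum]
  rw [sum_comm]
  refine sum_congr rfl fun c _ => sum_congr rfl fun σ _ => ?_
  congr 1
  refine prod_congr rfl fun i _ => ?_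
  rcases eq_or_ne i c with rfl | hic
  · simp
  · simp [hic]

theorem Derivation.map_det {n : Type*} [DecidableEq n] [Fintype n] (M : Matrix n n A) :
    D M.det = ∑ r, (M.updateRow r fun j => D (M r j)).det := by
  rw [← Matrix.det_transpose, D.map_det_eq_sum_updateCol]
  simp_rw [Matrix.updateCol_transpose, Matrix.det_transpose, Matrix.transpose_apply]

end Derivation

theorem StrictAnti.det_of_ite_eq {α R : Type*} [LinearOrder α] [CommRing R] {d : ℕ}
    {lam mu : Fin d → α} (hlam : StrictAnti lam) (hmu : StrictAnti mu) :
    (Matrix.of fun i j => if mu i = lam j then (1 : R) else 0).det = if lam = mu then 1 else 0 := by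
  split_ifs with h
  · subst h
    have : (Matrix.of fun i j => if lam i = lam j then (1 : R) else 0) = 1 := by
      ext i j
      simp [Matrix.one_apply, hlam.injective.eq_iff]
    rw [this, Matrix.det_one]
  · rw [Matrix.det_apply]
    refine sum_eq_zero fun σ _ => ?_
    obtain ⟨i, hi⟩ : ∃ i, mu (σ i) ≠ lam i := by
      by_contra! hσ
      have hσ_mono : StrictMono σ := fun a b hab => hmu.lt_iff_gt.mp (by simpa [hσ] using hlam hab)
      exact h (funext fun i => by rw [← hσ i, hσ_mono.apply_eq])
    rw [prod_eq_zero (mem_univ i) (by simp [hi]), smul_zero]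

section

variable {d : ℕ}

theorem strictAnti_of_mem_weylChamber {x : Fin d → ℤ} (hx : x ∈ WeylChamber d) :
    StrictAnti x :=
  fun i j => hx.1 i j

theorem not_injective_or_exists_eq_zero_of_isUnitStep {mu ν : Fin d → ℤ}
    (hmu : mu ∈ WeylChamber d) (hstep : IsUnitStep mu ν) (hν : ν ∉ WeylChamber d) :
    ¬ Function.Injective ν ∨ ∃ i, ν i = 0 := by
  obtain ⟨r, s, hs, rfl⟩ : ∃ r s, (s = 1 ∨ s = -1) ∧ ν = mu + Pi.single r s := by
    obtain ⟨r, rfl | rfl⟩ := hstep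
    exacts [⟨r, 1, .inl rfl, rfl⟩, ⟨r, -1, .inr rfl, by rw [Pi.single_neg, sub_eq_add_neg]⟩]
  by_contra! h
  obtain ⟨hinj, hne⟩ := h
  -- a unit step moves each difference `ν i - ν j` by at most one, and each `ν i` down to `≥ 0`
  refine hν ⟨fun i j hij => lt_of_le_of_ne ?_ (hinj.ne hij.ne'), fun i => ?_⟩
  · have := hmu.1 i j hij
    simp only [Pi.add_apply, Pi.single_apply]
    split_ifs <;> omega
  · have := hmu.2 i
    have := hne i
    simp only [Pi.add_apply, Pi.single_apply] at *
    split_ifs at * <;> omega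

abbrev OscWalk (d n : ℕ) (lam mu : Fin d → ℤ) : Type :=
  {p : Fin (n + 1) → (Fin d → ℤ) //
    p 0 = lam ∧ p (Fin.last n) = mu ∧ (∀ k, p k ∈ WeylChamber d) ∧
    ∀ k : Fin n, IsUnitStep (p k.castSucc) (p k.succ)}

theorem card_oscWalk_zero {lam : Fin d → ℤ} (hlam : lam ∈ WeylChamber d) (mu : Fin d → ℤ) :
    Nat.card (OscWalk d 0 lam mu) = if lam = mu then 1 else 0 := by
  split_ifs with h
  · subst h
    refine Nat.card_eq_one_iff_exists.mpr ⟨⟨fun _ => lam, rfl, rfl, fun _ => hlam, Fin.elim0⟩, ?_⟩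
    rintro ⟨p, hp0, -⟩
    exact Subtype.ext (funext fun k => by rwa [Fin.fin_one_eq_zero k])
  · have : IsEmpty (OscWalk d 0 lam mu) := ⟨fun p => h (p.2.1.symm.trans p.2.2.1)⟩
    exact Nat.card_of_isEmpty

theorem isEmpty_oscWalk_of_notMem (n : ℕ) (lam : Fin d → ℤ) {mu : Fin d → ℤ}
    (hmu : mu ∉ WeylChamber d) : IsEmpty (OscWalk d n lam mu) :=
  ⟨fun p => hmu (p.2.2.1 ▸ p.2.2.2.1 (Fin.last n))⟩

def OscWalk.snoc {n : ℕ} {lam ν mu : Fin d → ℤ} (q : OscWalk d n lam ν) (hν : IsUnitStep ν mu)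
    (hmu : mu ∈ WeylChamber d) : OscWalk d (n + 1) lam mu :=
  ⟨Fin.snoc (α := fun _ => Fin d → ℤ) q.1 mu, by
    refine ⟨?_, Fin.snoc_last _ _, Fin.lastCases ?_ fun k => ?_, Fin.lastCases ?_ fun k => ?_⟩
    · exact (Fin.snoc_castSucc (α := fun _ => Fin d → ℤ) mu q.1 0).trans q.2.1
    · rwa [Fin.snoc_last]
    · rw [Fin.snoc_castSucc]; exact q.2.2.2.1 k
    · rwa [Fin.snoc_castSucc, Fin.succ_last, Fin.snoc_last, q.2.2.1]
    · rw [Fin.snoc_castSucc, Fin.succ_castSucc, Fin.snoc_castSucc]; exact q.2.2.2.2 k⟩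

def oscWalkSuccEquiv (n : ℕ) (lam : Fin d → ℤ) {mu : Fin d → ℤ} (hmu : mu ∈ WeylChamber d) :
    OscWalk d (n + 1) lam mu ≃ Σ ν : {ν // IsUnitStep ν mu}, OscWalk d n lam ν where
  toFun p :=
    ⟨⟨p.1 (Fin.last n).castSucc, by simpa [p.2.2.1] using p.2.2.2.2 (Fin.last n)⟩,
      ⟨Fin.init p.1, p.2.1, rfl, fun k => p.2.2.2.1 _,
        fun k => by simpa only [Fin.init, Fin.succ_castSucc] using p.2.2.2.2 k.castSucc⟩⟩
  invFun q := q.2.snoc q.1.2 hmu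
  left_inv p := Subtype.ext <| by
    change Fin.snoc (Fin.init p.1) mu = p.1
    conv_rhs => rw [← Fin.snoc_init_self p.1, p.2.2.1]
  right_inv q := Sigma.subtype_ext
    (Subtype.ext ((Fin.snoc_castSucc (α := fun _ => Fin d → ℤ) _ _ _).trans q.2.2.2.1))
    (Fin.init_snoc (α := fun _ => Fin d → ℤ) _ _)

def unitStepNeighbor (mu : Fin d → ℤ) (x : Fin d × Bool) : Fin d → ℤ :=
  mu + Pi.single x.1 (bif x.2 then 1 else -1)

@[simp]
theorem unitStepNeighbor_true (mu : Fin d → ℤ) (i : Fin d) :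
    unitStepNeighbor mu (i, true) = mu + Pi.single i 1 :=
  rfl

@[simp]
theorem unitStepNeighbor_false (mu : Fin d → ℤ) (i : Fin d) :
    unitStepNeighbor mu (i, false) = mu - Pi.single i 1 := by
  rw [unitStepNeighbor, sub_eq_add_neg, ← Pi.single_neg]
  rfl

theorem unitStepNeighbor_injective (mu : Fin d → ℤ) : Function.Injective (unitStepNeighbor mu) := by
  rintro ⟨i, b⟩ ⟨j, c⟩ h
  have hi := congrFun (add_right_injective mu h) i
  obtain rfl : i = j := by
    by_contra hij
    cases b <;> simp [Pi.single_eq_of_ne hij] at hi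
  cases b <;> cases c <;> simp_all

theorem isUnitStep_unitStepNeighbor (mu : Fin d → ℤ) (x : Fin d × Bool) :
    IsUnitStep (unitStepNeighbor mu x) mu :=
  match x with
  | (i, false) => ⟨i, .inl (by simp)⟩
  | (i, true) => ⟨i, .inr (by simp)⟩

theorem exists_unitStepNeighbor_eq {ν mu : Fin d → ℤ} (h : IsUnitStep ν mu) :
    ∃ x, unitStepNeighbor mu x = ν := by
  obtain ⟨i, rfl | rfl⟩ := h
  · exact ⟨(i, false), by simp⟩
  · exact ⟨(i, true), by simp⟩

noncomputable def unitStepEquiv (mu : Fin d → ℤ) : Fin d × Bool ≃ {ν // IsUnitStep ν mu} :=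
  Equiv.ofBijective (fun x => ⟨unitStepNeighbor mu x, isUnitStep_unitStepNeighbor mu x⟩)
    ⟨fun _ _ h => unitStepNeighbor_injective mu (congrArg Subtype.val h),
      fun ν => (exists_unitStepNeighbor_eq ν.2).imp fun _ hx => Subtype.ext hx⟩

noncomputable def oscWalkSuccEquivNeighbor (n : ℕ) (lam : Fin d → ℤ) {mu : Fin d → ℤ}
    (hmu : mu ∈ WeylChamber d) :
    OscWalk d (n + 1) lam mu ≃ Σ x : Fin d × Bool, OscWalk d n lam (unitStepNeighbor mu x) :=
  (oscWalkSuccEquiv n lam hmu).trans (Equiv.sigmaCongrLeft (unitStepEquiv mu)).symm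

instance (n : ℕ) (lam mu : Fin d → ℤ) : Finite (OscWalk d n lam mu) := by
  induction n generalizing mu with
  | zero => exact Finite.of_injective (fun _ => ()) fun p q _ =>
      Subtype.ext (funext fun k => by rw [Fin.fin_one_eq_zero k, p.2.1, q.2.1])
  | succ n ih =>
    by_cases hmu : mu ∈ WeylChamber d
    · exact Finite.of_equiv _ (oscWalkSuccEquivNeighbor n lam hmu).symm
    · have := isEmpty_oscWalk_of_notMem (n + 1) lam hmu
      infer_instance

theorem card_oscWalk_succ (n : ℕ) (lam : Fin d → ℤ) {mu : Fin d → ℤ} (hmu : mu ∈ WeylChamber d) :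
    Nat.card (OscWalk d (n + 1) lam mu) = ∑ r, (Nat.card (OscWalk d n lam (mu + Pi.single r 1)) +
      Nat.card (OscWalk d n lam (mu - Pi.single r 1))) := by
  rw [Nat.card_congr (oscWalkSuccEquivNeighbor n lam hmu), Nat.card_sigma, Fintype.sum_prod_type]
  simp

noncomputable def besselMatrix (lam mu : Fin d → ℤ) : Matrix (Fin d) (Fin d) ℚ⟦X⟧ :=
  Matrix.of fun i j => besselI (mu i - lam j) - besselI (mu i + lam j)

@[simp]
theorem besselMatrix_apply (lam mu : Fin d → ℤ) (i j : Fin d) :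
    besselMatrix lam mu i j = besselI (mu i - lam j) - besselI (mu i + lam j) :=
  rfl

theorem besselMatrix_updateRow (lam : Fin d → ℤ) {mu ν : Fin d → ℤ} {r : Fin d}
    (h : ∀ i ≠ r, ν i = mu i) :
    (besselMatrix lam mu).updateRow r (besselMatrix lam ν r) = besselMatrix lam ν := by
  ext i j
  rcases eq_or_ne i r with rfl | hir
  · simp
  · simp [hir, h i hir]

theorem derivative_det_besselMatrix (lam mu : Fin d → ℤ) :
    derivative ℚ (besselMatrix lam mu).det = ∑ r, ((besselMatrix lam (mu + Pi.single r 1)).det +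
      (besselMatrix lam (mu - Pi.single r 1)).det) := by
  rw [Derivation.map_det]
  refine sum_congr rfl fun r _ => ?_
  have hrow : (fun j => derivative ℚ (besselMatrix lam mu r j)) =
      besselMatrix lam (mu + Pi.single r 1) r + besselMatrix lam (mu - Pi.single r 1) r := by
    ext1 j
    simp only [besselMatrix_apply, Pi.add_apply, Pi.sub_apply, Pi.single_eq_same, map_sub,
      derivative_besselI]
    ring_nf
  rw [hrow, Matrix.det_updateRow_add,
    besselMatrix_updateRow lam fun i hi => by simp [Pi.single_eq_of_ne hi],
    besselMatrix_updateRow lam fun i hi => by simp [Pi.single_eq_of_ne hi]]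

theorem det_besselMatrix_eq_zero_of_not_injective (lam : Fin d → ℤ) {mu : Fin d → ℤ}
    (hmu : ¬ Function.Injective mu) : (besselMatrix lam mu).det = 0 := by
  obtain ⟨i, j, hij, hne⟩ := Function.not_injective_iff.mp hmu
  exact Matrix.det_zero_of_row_eq hne (funext fun k => by simp [hij])

theorem det_besselMatrix_eq_zero_of_apply_eq_zero (lam : Fin d → ℤ) {mu : Fin d → ℤ}
    {r : Fin d} (hr : mu r = 0) : (besselMatrix lam mu).det = 0 :=
  Matrix.det_eq_zero_of_row_eq_zero r fun j => by simp [hr, ← besselI_neg (lam j)]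

theorem constantCoeff_det_besselMatrix {lam mu : Fin d → ℤ} (hlam : lam ∈ WeylChamber d)
    (hmu : mu ∈ WeylChamber d) :
    constantCoeff (besselMatrix lam mu).det = if lam = mu then 1 else 0 := by
  rw [RingHom.map_det, ← (strictAnti_of_mem_weylChamber hlam).det_of_ite_eq
    (strictAnti_of_mem_weylChamber hmu)]
  congr 1
  ext i j
  have hpos : mu i + lam j ≠ 0 := by linarith [hmu.2 i, hlam.2 j]
  simp [constantCoeff_besselI, hpos, sub_eq_zero]

theorem det_besselMatrix_eq_zero_of_isUnitStep (lam : Fin d → ℤ) {mu ν : Fin d → ℤ}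
    (hmu : mu ∈ WeylChamber d) (hstep : IsUnitStep mu ν) (hν : ν ∉ WeylChamber d) :
    (besselMatrix lam ν).det = 0 := by
  rcases not_injective_or_exists_eq_zero_of_isUnitStep hmu hstep hν with h | ⟨i, h⟩
  exacts [det_besselMatrix_eq_zero_of_not_injective lam h,
    det_besselMatrix_eq_zero_of_apply_eq_zero lam h]

end

theorem grabiner_magyar (d : ℕ) (lam mu : Fin d → ℤ)
    (hlam : lam ∈ WeylChamber d) (hmu : mu ∈ WeylChamber d) (n : ℕ) :
    (oscWalkCount d n lam mu : ℚ) =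
      n.factorial *
        PowerSeries.coeff (R := ℚ) n
          (Matrix.det (Matrix.of fun i j : Fin d =>
            besselI (mu i - lam j) - besselI (mu i + lam j))) := by
  change (Nat.card (OscWalk d n lam mu) : ℚ) = n ! * coeff n (besselMatrix lam mu).det
  induction n generalizing mu with
  | zero =>
    rw [card_oscWalk_zero hlam, coeff_zero_eq_constantCoeff_apply,
      constantCoeff_det_besselMatrix hlam hmu]
    split_ifs <;> simp
  | succ n ih =>
    have hstep : ∀ ν, IsUnitStep mu ν →
        (Nat.card (OscWalk d n lam ν) : ℚ) = n ! * coeff n (besselMatrix lam ν).det := by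
      intro ν hν
      by_cases hνW : ν ∈ WeylChamber d
      · exact ih ν hνW
      · have := isEmpty_oscWalk_of_notMem n lam hνW
        simp [det_besselMatrix_eq_zero_of_isUnitStep lam hmu hν hνW]
    calc (Nat.card (OscWalk d (n + 1) lam mu) : ℚ)
        = ∑ r, (n ! * coeff n (besselMatrix lam (mu + Pi.single r 1)).det +
            n ! * coeff n (besselMatrix lam (mu - Pi.single r 1)).det) := by
          rw [card_oscWalk_succ n lam hmu]
          push_cast
          exact sum_congr rfl fun r _ => by
            rw [hstep _ ⟨r, .inl rfl⟩, hstep _ ⟨r, .inr rfl⟩]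
      _ = n ! * coeff n (derivative ℚ (besselMatrix lam mu).det) := by
          simp only [derivative_det_besselMatrix, map_sum, map_add, mul_sum, mul_add]
      _ = (n + 1)! * coeff (n + 1) (besselMatrix lam mu).det := by
          rw [coeff_derivative, Nat.factorial_succ]
          push_cast
          ring
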